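/- arXiv:2404.17375 — 9 statements merged into one kernel-verified Lean document; each statement's English description precedes it below -/
import Mathlib

section
/- Let X and U be symmetric p×p real matrices such that XU + UX = 0 and X + U is positive definite. Then X is positive semidefinite, U is positive semidefinite, and XU = 0. -/
open Matrix

lemma lyap {p : ℕ} {S C : Matrix (Fin p) (Fin p) ℝ} (hS : S.PosDef)
    (h : S * C + C * S = 0) : C = 0 := by
  have hH := hS.1
  set Q : Matrix (Fin p) (Fin p) ℝ := (hH.eigenvectorUnitary : Matrix (Fin p) (Fin p) ℝ) with hQdef
  have hQ1 : star Q * Q = 1 := Unitary.coe_star_mul_self hH.eigenvectorUnitary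
  have hQ2 : Q * star Q = 1 := Unitary.coe_mul_star_self hH.eigenvectorUnitary
  set D : Matrix (Fin p) (Fin p) ℝ := diagonal (RCLike.ofReal ∘ hH.eigenvalues) with hDdef
  have hspec : S = Q * D * star Q := hH.spectral_theorem
  set C' : Matrix (Fin p) (Fin p) ℝ := star Q * C * Q with hC'def
  have e1 : D * C' = star Q * (S * C) * Q := by
    rw [hspec, hC'def]
    calc D * (star Q * C * Q) = (star Q * Q) * D * (star Q * C * Q) := by
          rw [hQ1, Matrix.one_mul]
      _ = star Q * (Q * D * star Q * C) * Q := by simp only [Matrix.mul_assoc]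
  have e2 : C' * D = star Q * (C * S) * Q := by
    rw [hspec, hC'def]
    calc star Q * C * Q * D = star Q * (C * (Q * (D * (star Q * Q)))) := by
          rw [hQ1]; simp only [Matrix.mul_one, Matrix.mul_assoc]
      _ = star Q * (C * (Q * D * star Q)) * Q := by simp only [Matrix.mul_assoc]
  have key : D * C' + C' * D = 0 := by
    rw [e1, e2, ← Matrix.add_mul, ← Matrix.mul_add, h, Matrix.mul_zero, Matrix.zero_mul]
  have hC' : C' = 0 := by
    ext i j
    have h2 := congrFun (congrFun key i) j
    simp only [Matrix.add_apply, hDdef, diagonal_mul, mul_diagonal, Matrix.zero_apply,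
      Function.comp, RCLike.ofReal_real_eq_id, id_eq] at h2
    have hpos : (0:ℝ) < hH.eigenvalues i + hH.eigenvalues j :=
      add_pos (hS.eigenvalues_pos i) (hS.eigenvalues_pos j)
    have h3 : (hH.eigenvalues i + hH.eigenvalues j) * C' i j = 0 := by
      rw [add_mul]; rw [mul_comm (C' i j) _] at h2; linarith
    simpa using (mul_eq_zero.mp h3).resolve_left hpos.ne'
  have hCC : C = Q * C' * star Q := by
    rw [hC'def]
    simp only [Matrix.mul_assoc]
    rw [hQ2]
    simp [← Matrix.mul_assoc, hQ2]
  rw [hCC, hC', Matrix.mul_zero, Matrix.zero_mul]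

lemma aux {p : ℕ} {S A : Matrix (Fin p) (Fin p) ℝ} (hS : S.PosDef)
    (hA : A.IsSymm) (hcomm : S * A = A * S) (hAS : A * S = A * A) : A.PosSemidef := by
  have hdet : IsUnit S.det := isUnit_iff_ne_zero.mpr hS.det_pos.ne'
  have hSinv : S⁻¹ * S = 1 := nonsing_inv_mul S hdet
  have hkey : A = Aᴴ * S⁻¹ * A := by
    have hAH : Aᴴ = A := by
      rw [conjTranspose_eq_transpose_of_trivial]; exact hA
    rw [hAH]
    calc A = (S⁻¹ * S) * A := by rw [hSinv, Matrix.one_mul]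
      _ = S⁻¹ * (S * A) := by rw [Matrix.mul_assoc]
      _ = S⁻¹ * (A * S) := by rw [hcomm]
      _ = S⁻¹ * (A * A) := by rw [hAS]
      _ = (S⁻¹ * A) * A := by rw [Matrix.mul_assoc]
      _ = (A * S⁻¹) * A := by
          congr 1
          calc S⁻¹ * A = S⁻¹ * A * (S * S⁻¹) := by
                rw [mul_nonsing_inv S hdet, Matrix.mul_one]
            _ = S⁻¹ * (A * S) * S⁻¹ := by simp only [Matrix.mul_assoc]
            _ = S⁻¹ * (S * A) * S⁻¹ := by rw [hcomm]
            _ = (S⁻¹ * S) * (A * S⁻¹) := by simp only [Matrix.mul_assoc]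
            _ = A * S⁻¹ := by rw [hSinv, Matrix.one_mul]
  rw [hkey]
  exact (hS.posSemidef.inv).conjTranspose_mul_mul_same A

theorem stmt0 (p : ℕ) (X U : Matrix (Fin p) (Fin p) ℝ)
    (hX : X.IsSymm) (hU : U.IsSymm)
    (h : X * U + U * X = 0) (hpd : (X + U).PosDef) :
    X.PosSemidef ∧ U.PosSemidef ∧ X * U = 0 := by
  set S := X + U with hS
  have hanti : U * X = -(X * U) := by
    rw [eq_neg_iff_add_eq_zero, add_comm]; exact h
  have hXU : X * U = -(U * X) := by rw [hanti, neg_neg]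
  have hsq : S * S = X * X + U * U := by
    have h1 : S * S = X * X + U * U + (X * U + U * X) := by rw [hS]; noncomm_ring
    rw [h, add_zero] at h1; exact h1
  have hXUU : X * (U * U) = (U * U) * X := by
    calc X * (U * U) = (X * U) * U := by rw [Matrix.mul_assoc]
      _ = (-(U * X)) * U := by rw [hXU]
      _ = -(U * ((X * U))) := by noncomm_ring
      _ = -(U * (-(U * X))) := by rw [hXU]
      _ = (U * U) * X := by noncomm_ring
  have hcomm2 : X * (S * S) = (S * S) * X := by
    rw [hsq, Matrix.mul_add, Matrix.add_mul, hXUU, ← Matrix.mul_assoc, Matrix.mul_assoc]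
  have hlyap : S * (S * X - X * S) + (S * X - X * S) * S = 0 := by
    have e : S * (S * X - X * S) + (S * X - X * S) * S = (S * S) * X - X * (S * S) := by
      noncomm_ring
    rw [e, ← hcomm2, sub_self]
  have hXS : S * X = X * S := sub_eq_zero.mp (lyap hpd hlyap)
  have hUXeq : U * X = X * U := by
    have h1 : S * X = X * X + U * X := by rw [hS]; noncomm_ring
    have h2 : X * S = X * X + X * U := by rw [hS]; noncomm_ring
    have := hXS; rw [h1, h2] at this
    exact add_left_cancel this
  have hXU0 : X * U = 0 := by
    have hadd : X * U + X * U = 0 := by rw [← hUXeq] at h ⊢; exact h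
    have h2 : (2:ℝ) • (X * U) = 0 := by rw [two_smul]; exact hadd
    exact (smul_eq_zero.mp h2).resolve_left (by norm_num)
  have hUX0 : U * X = 0 := by rw [hUXeq, hXU0]
  refine ⟨?_, ?_, hXU0⟩
  · exact aux hpd hX hXS (by rw [hS, Matrix.mul_add, hXU0, add_zero])
  · have hSU : S * U = U * U := by rw [hS, Matrix.add_mul, hXU0, zero_add]
    have hUS : U * S = U * U := by rw [hS, Matrix.mul_add, hUX0, zero_add]
    exact aux hpd hU (by rw [hSU, hUS]) hUS
end

section
/- Let L and M be real p×m matrices. Then L L^T = M M^T if and only if there exists an orthogonal m×m matrix Ω such that L Ω = M. -/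
/-!
If `A Aᴴ = B Bᴴ` then `‖Aᴴ x‖ = ‖Bᴴ x‖` for every `x`, so `Aᴴ x ↦ Bᴴ x` is a well-defined linear
isometry on the range of `Aᴴ`. Extending it to an isometry `V` of the whole space gives a unitary
matrix with `V Aᴴ = Bᴴ`, i.e. `A Vᴴ = B`. The converse is `A U (A U)ᴴ = A (U Uᴴ) Aᴴ = A Aᴴ`.
-/

section

variable {R E V W : Type*} [Ring R] [AddCommGroup E] [Module R E]
  [SeminormedAddCommGroup V] [Module R V] [NormedAddCommGroup W] [Module R W]

theorem LinearMap.exists_linearIsometry_range_apply_eq (F : E →ₗ[R] V) (G : E →ₗ[R] W)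
    (h : ∀ x, ‖F x‖ = ‖G x‖) :
    ∃ ψ : LinearMap.range F →ₗᵢ[R] W, ∀ x, ψ (F.rangeRestrict x) = G x := by
  have hker : LinearMap.ker F ≤ LinearMap.ker G := fun x hx ↦ by
    rw [LinearMap.mem_ker, ← norm_eq_zero, ← h, LinearMap.mem_ker.mp hx, norm_zero]
  let φ := (LinearMap.ker F).liftQ G hker ∘ₗ F.quotKerEquivRange.symm.toLinearMap
  have hφ : ∀ x, φ (F.rangeRestrict x) = G x := fun x ↦ by
    simp only [φ, LinearMap.comp_apply, LinearEquiv.coe_coe]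
    exact congrArg _ (F.quotKerEquivRange_symm_apply_image x _)
  refine ⟨⟨φ, ?_⟩, hφ⟩
  rintro ⟨_, x, rfl⟩
  exact (congrArg norm (hφ x)).trans (h x).symm

end

section

variable {𝕜 E V : Type*} [RCLike 𝕜] [AddCommGroup E] [Module 𝕜 E]
  [NormedAddCommGroup V] [InnerProductSpace 𝕜 V] [FiniteDimensional 𝕜 V]

theorem LinearMap.exists_linearIsometry_comp_eq_of_norm_eq (F G : E →ₗ[𝕜] V)
    (h : ∀ x, ‖F x‖ = ‖G x‖) : ∃ T : V →ₗᵢ[𝕜] V, T.toLinearMap ∘ₗ F = G := by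
  obtain ⟨ψ, hψ⟩ := F.exists_linearIsometry_range_apply_eq G h
  exact ⟨ψ.extend, LinearMap.ext fun x ↦ (ψ.extend_apply _).trans (hψ x)⟩

end

namespace Matrix

variable {𝕜 m n : Type*} [RCLike 𝕜] [Fintype m] [DecidableEq m] [Fintype n] [DecidableEq n]

theorem norm_toEuclideanLin_conjTranspose_sq (A : Matrix m n 𝕜) (x : EuclideanSpace 𝕜 m) :
    ‖toEuclideanLin Aᴴ x‖ ^ 2 = RCLike.re (inner 𝕜 x (toEuclideanLin (A * Aᴴ) x)) := by
  have hA : toEuclideanLin A = LinearMap.adjoint (toEuclideanLin Aᴴ) := by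
    rw [← toEuclideanLin_conjTranspose_eq_adjoint, conjTranspose_conjTranspose]
  rw [toLpLin_mul_same, hA, LinearMap.comp_apply, LinearMap.adjoint_inner_right,
    inner_self_eq_norm_sq]

theorem toEuclideanLin_symm_mem_unitaryGroup (T : EuclideanSpace 𝕜 n →ₗᵢ[𝕜] EuclideanSpace 𝕜 n) :
    toEuclideanLin.symm T.toLinearMap ∈ unitaryGroup n 𝕜 := by
  rw [mem_unitaryGroup_iff', star_eq_conjTranspose]
  apply toEuclideanLin.injective
  rw [toLpLin_mul_same, toEuclideanLin_conjTranspose_eq_adjoint, LinearEquiv.apply_symm_apply,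
    toLpLin_one]
  refine LinearMap.ext fun x ↦ ext_inner_right 𝕜 fun y ↦ ?_
  rw [LinearMap.comp_apply, LinearMap.adjoint_inner_left, LinearMap.id_apply]
  exact T.inner_map_map x y

theorem mul_conjTranspose_eq_iff_exists_mem_unitaryGroup (A B : Matrix m n 𝕜) :
    A * Aᴴ = B * Bᴴ ↔ ∃ U ∈ unitaryGroup n 𝕜, A * U = B := by
  constructor
  · intro h
    have hnorm : ∀ x, ‖toEuclideanLin Aᴴ x‖ = ‖toEuclideanLin Bᴴ x‖ := fun x ↦ by
      rw [← sq_eq_sq₀ (norm_nonneg _) (norm_nonneg _), norm_toEuclideanLin_conjTranspose_sq,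
        norm_toEuclideanLin_conjTranspose_sq, h]
    obtain ⟨T, hT⟩ := (toEuclideanLin Aᴴ).exists_linearIsometry_comp_eq_of_norm_eq _ hnorm
    set V := toEuclideanLin.symm T.toLinearMap
    have hV : V * Aᴴ = Bᴴ := toEuclideanLin.injective <| by
      rw [toLpLin_mul_same, LinearEquiv.apply_symm_apply, hT]
    refine ⟨Vᴴ, Unitary.star_mem (toEuclideanLin_symm_mem_unitaryGroup T), ?_⟩
    rw [← conjTranspose_conjTranspose B, ← hV, conjTranspose_mul, conjTranspose_conjTranspose]
  · rintro ⟨U, hU, rfl⟩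
    rw [conjTranspose_mul, Matrix.mul_assoc, ← Matrix.mul_assoc U, ← star_eq_conjTranspose,
      (mem_unitaryGroup_iff).mp hU, Matrix.one_mul]

end Matrix

open Matrix

theorem stmt1 (p m : ℕ) (L M : Matrix (Fin p) (Fin m) ℝ) :
    L * Lᵀ = M * Mᵀ ↔
      ∃ Ω : Matrix (Fin m) (Fin m) ℝ, Ωᵀ * Ω = 1 ∧ L * Ω = M := by
  simpa only [conjTranspose_eq_transpose_of_trivial, exists_prop, mem_orthogonalGroup_iff']
    using mul_conjTranspose_eq_iff_exists_mem_unitaryGroup L M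
end

section
/- Let X and W be symmetric positive semidefinite p×p matrices with W X = 0 and X + W positive definite, and let Y be a symmetric p×p matrix satisfying X Y + Y X = 0 and Y W + W Y = 0. Then Y = 0. -/
/-!
`S = X + W` is positive definite and anticommutes with `Y`. Then `Y S Y = Yᴴ S Y`
is positive semidefinite, while cycling the trace and anticommuting gives
`tr (Y S Y) = tr (S Y Y) = - tr (Y S Y)`, so `Yᴴ S Y = 0`, and positive definiteness of `S`
forces `Y = 0`.
-/

open Matrix
open scoped ComplexOrder

namespace Matrix

variable {m n 𝕜 : Type*} [Fintype m] [Fintype n] [RCLike 𝕜]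

lemma PosDef.eq_zero_of_conjTranspose_mul_mul_eq_zero {S : Matrix n n 𝕜} (hS : S.PosDef)
    {B : Matrix n m 𝕜} (h : Bᴴ * S * B = 0) : B = 0 := by
  refine ext_iff_mulVec.mpr fun v ↦ ?_
  rw [zero_mulVec]
  by_contra hBv
  have hpos := hS.dotProduct_mulVec_pos hBv
  rw [star_mulVec, mulVec_mulVec, dotProduct_mulVec, vecMul_vecMul, ← Matrix.mul_assoc, h] at hpos
  simp at hpos

lemma PosDef.eq_zero_of_mul_add_mul_eq_zero {S Y : Matrix n n 𝕜} (hS : S.PosDef)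
    (hY : Y.IsHermitian) (h : S * Y + Y * S = 0) : Y = 0 := by
  have hpsd : (Yᴴ * S * Y).PosSemidef := hS.posSemidef.conjTranspose_mul_mul_same Y
  have htrace : (Yᴴ * S * Y).trace = 0 := by
    have hanti : S * Y = -(Y * S) := eq_neg_of_add_eq_zero_left h
    have : (Yᴴ * S * Y).trace = -(Yᴴ * S * Y).trace :=
      calc (Yᴴ * S * Y).trace = (S * Y * Y).trace := by rw [hY.eq, mul_assoc, trace_mul_comm]
        _ = -(Yᴴ * S * Y).trace := by rw [hanti, hY.eq, neg_mul, trace_neg]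
    exact CharZero.eq_neg_self_iff.mp this
  exact hS.eq_zero_of_conjTranspose_mul_mul_eq_zero (hpsd.trace_eq_zero_iff.mp htrace)

end Matrix

theorem stmt3_general (p : ℕ) (X W Y : Matrix (Fin p) (Fin p) ℝ)
    (hpd : (X + W).PosDef)
    (hY : Y.IsSymm) (hXY : X * Y + Y * X = 0) (hYW : Y * W + W * Y = 0) :
    Y = 0 := by
  refine hpd.eq_zero_of_mul_add_mul_eq_zero (isHermitian_iff_isSymm.mpr hY) ?_
  calc (X + W) * Y + Y * (X + W) = (X * Y + Y * X) + (Y * W + W * Y) := by noncomm_ring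
    _ = 0 := by rw [hXY, hYW, add_zero]

theorem stmt3 (p : ℕ) (X W Y : Matrix (Fin p) (Fin p) ℝ)
    (hX : X.PosSemidef) (hW : W.PosSemidef) (hWX : W * X = 0)
    (hpd : (X + W).PosDef)
    (hY : Y.IsSymm) (hXY : X * Y + Y * X = 0) (hYW : Y * W + W * Y = 0) :
    Y = 0 :=
  stmt3_general p X W Y hpd hY hXY hYW
end

section
/- Let X be a symmetric positive semidefinite p×p matrix. Suppose there exists a vector t̄ with all entries strictly positive such that X t̄ = 0. Then the kernel of X equals the span of the vertices of the polytope T_*(X) = {t : X t = 0, t ≥ 0, ∑_k t_k = 1}. -/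
open Matrix

theorem stmt4 (p : ℕ) (X : Matrix (Fin p) (Fin p) ℝ)
    (hX : X.PosSemidef)
    (tb : Fin p → ℝ) (htb : ∀ k, 0 < tb k) (hker : X.mulVec tb = 0) :
    {t : Fin p → ℝ | X.mulVec t = 0} =
      ↑(Submodule.span ℝ
        (Set.extremePoints ℝ
          {t : Fin p → ℝ |
            X.mulVec t = 0 ∧ (∀ k, 0 ≤ t k) ∧ ∑ k, t k = 1})) := by
  set T : Set (Fin p → ℝ) :=
    {t : Fin p → ℝ | X.mulVec t = 0 ∧ (∀ k, 0 ≤ t k) ∧ ∑ k, t k = 1} with hT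
  set E := Set.extremePoints ℝ T with hE
  have hmulVec : Continuous fun t : Fin p → ℝ => X.mulVec t :=
    X.mulVecLin.continuous_of_finiteDimensional
  -- T is closed
  have hTclosed : IsClosed T := by
    have h1 : IsClosed {t : Fin p → ℝ | X.mulVec t = 0} :=
      isClosed_eq hmulVec continuous_const
    have h2 : IsClosed {t : Fin p → ℝ | ∀ k, 0 ≤ t k} := by
      have : {t : Fin p → ℝ | ∀ k, 0 ≤ t k} = ⋂ k, {t | 0 ≤ t k} := by
        ext t; simp
      rw [this]
      exact isClosed_iInter fun k => isClosed_le continuous_const (continuous_apply k)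
    have h3 : IsClosed {t : Fin p → ℝ | ∑ k, t k = 1} :=
      isClosed_eq (by continuity) continuous_const
    have : T = {t : Fin p → ℝ | X.mulVec t = 0} ∩
        ({t : Fin p → ℝ | ∀ k, 0 ≤ t k} ∩ {t : Fin p → ℝ | ∑ k, t k = 1}) := by
      ext t; simp [hT, Set.mem_setOf_eq, and_assoc]
    rw [this]
    exact h1.inter (h2.inter h3)
  -- T is compact
  have hTcompact : IsCompact T := by
    have hsub : T ⊆ Set.pi Set.univ (fun _ : Fin p => Set.Icc (0:ℝ) 1) := by
      rintro t ⟨-, hpos, hsum⟩ k -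
      refine ⟨hpos k, ?_⟩
      calc t k ≤ ∑ j, t j := Finset.single_le_sum (fun j _ => hpos j) (Finset.mem_univ k)
        _ = 1 := hsum
    exact (isCompact_univ_pi fun _ => isCompact_Icc).of_isClosed_subset hTclosed hsub
  -- T is convex
  have hTconvex : Convex ℝ T := by
    rintro x ⟨hx0, hxpos, hxsum⟩ y ⟨hy0, hypos, hysum⟩ a b ha hb hab
    refine ⟨?_, fun k => add_nonneg (mul_nonneg ha (hxpos k)) (mul_nonneg hb (hypos k)), ?_⟩
    · simp [Matrix.mulVec_add, Matrix.mulVec_smul, hx0, hy0]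
    · simp only [Pi.add_apply, Pi.smul_apply, smul_eq_mul, Finset.sum_add_distrib,
        ← Finset.mul_sum, hxsum, hysum, mul_one]
      exact hab
  -- T ⊆ span E
  have hTspan : T ⊆ ↑(Submodule.span ℝ E) := by
    have hKM := closure_convexHull_extremePoints hTcompact hTconvex
    rw [← hKM, ← hE]
    have h1 : convexHull ℝ E ⊆ ↑(Submodule.span ℝ E) :=
      convexHull_min Submodule.subset_span (Submodule.span ℝ E).convex
    have h2 : IsClosed (↑(Submodule.span ℝ E) : Set (Fin p → ℝ)) :=
      (Submodule.span ℝ E).closed_of_finiteDimensional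
    exact (closure_minimal h1 h2)
  ext t
  simp only [Set.mem_setOf_eq, SetLike.mem_coe]
  constructor
  · intro ht
    -- construct small perturbation
    rcases Nat.eq_zero_or_pos p with hp | hp
    · have : t = 0 := by
        funext k; exact absurd k.2 (by omega)
      simp [this]
    have hne : (Finset.univ : Finset (Fin p)).Nonempty := by
      simpa [Finset.univ_nonempty_iff] using Fin.pos_iff_nonempty.mp hp
    set ε : ℝ := Finset.univ.inf' hne (fun k => tb k / (|t k| + 1)) with hε
    have hεpos : 0 < ε := by
      rw [hε, Finset.lt_inf'_iff]
      intro k _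
      exact div_pos (htb k) (by positivity)
    have hεk : ∀ k, ε * |t k| < tb k := by
      intro k
      have h1 : ε ≤ tb k / (|t k| + 1) := Finset.inf'_le _ (Finset.mem_univ k)
      calc ε * |t k| < ε * (|t k| + 1) := by nlinarith
        _ ≤ tb k / (|t k| + 1) * (|t k| + 1) := by
            apply mul_le_mul_of_nonneg_right h1 (by positivity)
        _ = tb k := by field_simp
    have hvpos : ∀ k, 0 < tb k + ε * t k := by
      intro k
      have := hεk k
      have h2 : ε * t k ≥ -(ε * |t k|) := by
        have : t k ≥ -|t k| := neg_abs_le (t k)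
        nlinarith
      linarith
    set v : Fin p → ℝ := tb + ε • t with hv
    have hvker : X.mulVec v = 0 := by
      rw [hv, Matrix.mulVec_add, Matrix.mulVec_smul, hker, ht]; simp
    set S1 : ℝ := ∑ k, tb k with hS1
    set S2 : ℝ := ∑ k, v k with hS2
    have hS1pos : 0 < S1 := Finset.sum_pos (fun k _ => htb k) hne
    have hS2pos : 0 < S2 := Finset.sum_pos (fun k _ => hvpos k) hne
    have hu : S1⁻¹ • tb ∈ T := by
      refine ⟨by rw [Matrix.mulVec_smul, hker]; simp, fun k => by
        simp only [Pi.smul_apply, smul_eq_mul]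
        exact mul_nonneg (inv_nonneg.2 hS1pos.le) (htb k).le, ?_⟩
      simp only [Pi.smul_apply, smul_eq_mul, ← Finset.mul_sum, ← hS1]
      field_simp
    have hw : S2⁻¹ • v ∈ T := by
      refine ⟨by rw [Matrix.mulVec_smul, hvker]; simp,
        fun k => by
        simp only [Pi.smul_apply, smul_eq_mul]
        exact mul_nonneg (inv_nonneg.2 hS2pos.le) (hvpos k).le, ?_⟩
      simp only [Pi.smul_apply, smul_eq_mul, ← Finset.mul_sum, ← hS2]
      field_simp
    have hmem1 : tb ∈ Submodule.span ℝ E := by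
      have := hTspan hu
      have h := Submodule.smul_mem (Submodule.span ℝ E) S1 this
      rwa [smul_smul, mul_inv_cancel₀ hS1pos.ne', one_smul] at h
    have hmem2 : v ∈ Submodule.span ℝ E := by
      have := hTspan hw
      have h := Submodule.smul_mem (Submodule.span ℝ E) S2 this
      rwa [smul_smul, mul_inv_cancel₀ hS2pos.ne', one_smul] at h
    have hmem3 : ε • t ∈ Submodule.span ℝ E := by
      have : ε • t = v - tb := by rw [hv]; abel
      rw [this]
      exact Submodule.sub_mem _ hmem2 hmem1
    have h := Submodule.smul_mem (Submodule.span ℝ E) ε⁻¹ hmem3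
    rwa [smul_smul, inv_mul_cancel₀ hεpos.ne', one_smul] at h
  · intro ht
    -- span E ⊆ kernel
    have hker' : ∀ s ∈ Submodule.span ℝ E, X.mulVec s = 0 := by
      intro s hs
      have hEsub : E ⊆ ↑(LinearMap.ker X.mulVecLin) := by
        intro x hx
        have : x ∈ T := extremePoints_subset hx
        exact this.1
      have := Submodule.span_le.mpr hEsub
      exact this hs
    exact hker' t ht
end

section
/- Let X be a symmetric positive semidefinite p×p matrix and Z a symmetric p×p matrix with X Z = 0. Let τ(j), j ∈ J_b, be a basis of the kernel H(X) = {t ∈ ℝ^p : X t = 0}. Then Z can be written as Z = ∑_{(i,j)∈V(J_b)} β_{ij} (τ(i)+τ(j))(τ(i)+τ(j))^T for some real numbers β_{ij}, where V(J_b) = {(i,j) : i,j ∈ J_b, i ≤ j}. -/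
open Matrix

theorem stmt5 (p n : ℕ) (X Z : Matrix (Fin p) (Fin p) ℝ)
    (hX : X.PosSemidef) (hZ : Z.IsSymm) (hXZ : X * Z = 0)
    (τ : Fin n → (Fin p → ℝ))
    (hindep : LinearIndependent ℝ τ)
    (hspan : Submodule.span ℝ (Set.range τ) =
      LinearMap.ker X.mulVecLin) :
    ∃ β : Fin n → Fin n → ℝ,
      Z = ∑ i : Fin n, ∑ j ∈ Finset.univ.filter (fun j => i ≤ j),
        β i j • vecMulVec (τ i + τ j) (τ i + τ j) := by
  classical
  have hXsymm : Xᵀ = X := hX.1.eq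
  -- columns of Z are in the kernel
  have hcol : ∀ k, (fun j => Z j k) ∈ LinearMap.ker X.mulVecLin := by
    intro k
    rw [LinearMap.mem_ker]
    funext l
    have : (X * Z) l k = 0 := by rw [hXZ]; rfl
    simpa [mulVecLin, mulVec, dotProduct, Matrix.mul_apply] using this
  have hcol' : ∀ k, ∃ a : Fin n → ℝ, ∑ i, a i • τ i = (fun j => Z j k) := by
    intro k
    have := hcol k
    rw [← hspan, Submodule.mem_span_range_iff_exists_fun] at this
    exact this
  choose a ha using hcol'
  have haZ : ∀ k j, ∑ i, a k i * τ i j = Z j k := by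
    intro k j
    have := congrFun (ha k) j
    simpa using this
  -- Z * X = 0
  have hZX : Z * X = 0 := by
    have := congrArg Matrix.transpose hXZ
    rw [Matrix.transpose_mul, hZ.eq, hXsymm] at this
    simpa using this
  -- the coefficient vectors v i = fun k => a k i are in the kernel
  have hv : ∀ i, X.mulVec (fun k => a k i) = 0 := by
    intro i
    funext l
    have hzero : ∑ i', (X.mulVec (fun k => a k i') l) • τ i' = 0 := by
      funext j
      simp only [Finset.sum_apply, Pi.smul_apply, smul_eq_mul, Pi.zero_apply]
      have h2 : (Z * X) j l = 0 := by rw [hZX]; rfl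
      rw [Matrix.mul_apply] at h2
      calc ∑ i', X.mulVec (fun k => a k i') l * τ i' j
          = ∑ i', ∑ k, X l k * a k i' * τ i' j := by
            refine Finset.sum_congr rfl fun i' _ => ?_
            rw [show X.mulVec (fun k => a k i') l = ∑ k, X l k * a k i' by
              simp [mulVec, dotProduct]]
            rw [Finset.sum_mul]
        _ = ∑ k, ∑ i', X l k * a k i' * τ i' j := Finset.sum_comm
        _ = ∑ k, X l k * Z j k := by
            refine Finset.sum_congr rfl fun k _ => ?_
            rw [← haZ k j, Finset.mul_sum]
            exact Finset.sum_congr rfl fun i' _ => by ring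
        _ = ∑ k, Z j k * X k l := by
            refine Finset.sum_congr rfl fun k _ => ?_
            have hx : X l k = X k l := by
              rw [← Matrix.transpose_apply X k l, hXsymm]
            rw [hx]; ring
        _ = 0 := h2
    exact Fintype.linearIndependent_iff.mp hindep _ hzero i
  -- expand v i in the basis
  have hv' : ∀ i, ∃ c : Fin n → ℝ, ∑ i', c i' • τ i' = (fun k => a k i) := by
    intro i
    have : (fun k => a k i) ∈ LinearMap.ker X.mulVecLin := by
      rw [LinearMap.mem_ker]
      exact hv i
    rw [← hspan, Submodule.mem_span_range_iff_exists_fun] at this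
    exact this
  choose c hc using hv'
  have hck : ∀ i k, ∑ i', c i i' * τ i' k = a k i := by
    intro i k
    have := congrFun (hc i) k
    simpa using this
  -- scalar expansion of Z
  have hs : ∀ j k, ∑ i, ∑ i', c i i' * (τ i j * τ i' k) = Z j k := by
    intro j k
    calc ∑ i, ∑ i', c i i' * (τ i j * τ i' k)
        = ∑ i, τ i j * (∑ i', c i i' * τ i' k) := by
          refine Finset.sum_congr rfl fun i _ => ?_
          rw [Finset.mul_sum]
          refine Finset.sum_congr rfl fun i' _ => ?_
          ring
      _ = ∑ i, τ i j * a k i := by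
          refine Finset.sum_congr rfl fun i _ => ?_
          rw [hck]
      _ = ∑ i, a k i * τ i j := by
          refine Finset.sum_congr rfl fun i _ => ?_; ring
      _ = Z j k := haZ k j
  -- the span of the target family
  set W : Fin n → Fin n → Matrix (Fin p) (Fin p) ℝ :=
    fun i j => vecMulVec (τ i + τ j) (τ i + τ j) with hW
  set f : {q : Fin n × Fin n // q.1 ≤ q.2} → Matrix (Fin p) (Fin p) ℝ :=
    fun q => W q.1.1 q.1.2 with hf
  set M : Submodule ℝ (Matrix (Fin p) (Fin p) ℝ) :=
    Submodule.span ℝ (Set.range f) with hM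
  have hWmem : ∀ i j, W i j ∈ M := by
    intro i j
    rcases le_total i j with h | h
    · exact Submodule.subset_span ⟨⟨(i, j), h⟩, rfl⟩
    · have : W i j = W j i := by
        simp [hW, add_comm]
      rw [this]
      exact Submodule.subset_span ⟨⟨(j, i), h⟩, rfl⟩
  have hPmem : ∀ i j, vecMulVec (τ i) (τ j) + vecMulVec (τ j) (τ i) ∈ M := by
    intro i j
    have hid : vecMulVec (τ i) (τ j) + vecMulVec (τ j) (τ i)
        = W i j + (-(1/4 : ℝ)) • W i i + (-(1/4 : ℝ)) • W j j := by
      ext x y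
      simp [hW, vecMulVec_apply]
      ring
    rw [hid]
    exact add_mem (add_mem (hWmem i j) (Submodule.smul_mem _ _ (hWmem i i)))
      (Submodule.smul_mem _ _ (hWmem j j))
  -- Z is in the span
  have hZmem : Z ∈ M := by
    have key : Z = ∑ i, ∑ i', (c i i' / 2) •
        (vecMulVec (τ i) (τ i') + vecMulVec (τ i') (τ i)) := by
      ext x y
      have h1 := hs x y
      have h2 := hs y x
      have hsym : Z y x = Z x y := by
        conv_lhs => rw [← hZ.eq]
        rfl
      simp only [Matrix.sum_apply, Matrix.smul_apply, Matrix.add_apply,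
        vecMulVec_apply, smul_eq_mul]
      have : ∑ i, ∑ i', c i i' / 2 * (τ i x * τ i' y + τ i' x * τ i y)
          = (∑ i, ∑ i', c i i' * (τ i x * τ i' y)) / 2
            + (∑ i, ∑ i', c i i' * (τ i y * τ i' x)) / 2 := by
        rw [Finset.sum_div, Finset.sum_div, ← Finset.sum_add_distrib]
        refine Finset.sum_congr rfl fun i _ => ?_
        rw [Finset.sum_div, Finset.sum_div, ← Finset.sum_add_distrib]
        refine Finset.sum_congr rfl fun i' _ => ?_
        ring
      rw [this, h1, h2, hsym]
      ring
    rw [key]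
    exact Submodule.sum_mem _ (fun i _ => Submodule.sum_mem _ (fun i' _ =>
      Submodule.smul_mem _ _ (hPmem i i')))
  -- extract coefficients
  rw [hM, Submodule.mem_span_range_iff_exists_fun] at hZmem
  obtain ⟨b, hb⟩ := hZmem
  refine ⟨fun i j => if h : i ≤ j then b ⟨(i, j), h⟩ else 0, ?_⟩
  rw [← hb]
  have step1 : ∑ q : {q : Fin n × Fin n // q.1 ≤ q.2}, b q • f q
      = ∑ q ∈ Finset.univ.filter (fun q : Fin n × Fin n => q.1 ≤ q.2),
          (if h : q.1 ≤ q.2 then b ⟨q, h⟩ • W q.1 q.2 else 0) := by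
    rw [Finset.sum_subtype (p := fun q : Fin n × Fin n => q.1 ≤ q.2) _
      (fun q => by simp)
      (fun q => if h : q.1 ≤ q.2 then b ⟨q, h⟩ • W q.1 q.2 else 0)]
    refine Finset.sum_congr rfl fun q _ => ?_
    rw [dif_pos q.2, Subtype.coe_eta]
  have step2 : ∑ q ∈ Finset.univ.filter (fun q : Fin n × Fin n => q.1 ≤ q.2),
      (if h : q.1 ≤ q.2 then b ⟨q, h⟩ • W q.1 q.2 else 0)
      = ∑ i : Fin n, ∑ j ∈ Finset.univ.filter (fun j => i ≤ j),
          (if h : i ≤ j then b ⟨(i, j), h⟩ else 0) • W i j := by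
    rw [Finset.sum_filter]
    rw [← Finset.univ_product_univ, Finset.sum_product]
    refine Finset.sum_congr rfl fun i _ => ?_
    rw [Finset.sum_filter]
    refine Finset.sum_congr rfl fun j _ => ?_
    by_cases h : i ≤ j <;> simp [h]
  exact step1.trans step2
end

section
/- The cone of completely positive p×p matrices CP(p) is the dual cone of the cone of copositive matrices COP(p) with respect to the trace inner product on symmetric matrices: CP(p) = {U ∈ S(p) : trace(U X) ≥ 0 for all X ∈ COP(p)}. -/
open Matrix Finset

private lemma sum_dite_fin {M : Type*} [AddCommMonoid M] {m N : ℕ} (h : m ≤ N) (G : Fin m → M) :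
    (∑ i : Fin N, if hh : (i : ℕ) < m then G ⟨i, hh⟩ else 0) = ∑ j : Fin m, G j := by
  have e1 : (∑ i : Fin N, if hh : (i : ℕ) < m then G ⟨i, hh⟩ else 0)
      = ∑ i ∈ Finset.range N, (fun i => if hh : i < m then G ⟨i, hh⟩ else 0) i :=
    Fin.sum_univ_eq_sum_range (fun i => if hh : i < m then G ⟨i, hh⟩ else 0) N
  have e3 : (∑ j : Fin m, if hh : (j : ℕ) < m then G ⟨j, hh⟩ else 0)
      = ∑ i ∈ Finset.range m, (fun i => if hh : i < m then G ⟨i, hh⟩ else 0) i :=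
    Fin.sum_univ_eq_sum_range (fun i => if hh : i < m then G ⟨i, hh⟩ else 0) m
  rw [e1, ← Finset.sum_subset (Finset.range_subset_range.2 h)
    (fun i _ hi => dif_neg (by simpa using hi)), ← e3]
  exact Finset.sum_congr rfl fun j _ => by rw [dif_pos j.isLt]

private lemma isCompact_convexHull' {E : Type*} [NormedAddCommGroup E] [NormedSpace ℝ E]
    [FiniteDimensional ℝ E] {s : Set E} (hs : IsCompact s) (hne : s.Nonempty) :
    IsCompact (convexHull ℝ s) := by
  obtain ⟨g0, hg0⟩ := hne
  set N := Module.finrank ℝ E + 1 with hN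
  have key : convexHull ℝ s =
      (fun q : (Fin N → ℝ) × (Fin N → E) => ∑ i, q.1 i • q.2 i) ''
        (stdSimplex ℝ (Fin N) ×ˢ Set.pi Set.univ fun _ => s) := by
    apply Set.Subset.antisymm
    · intro x hx
      rw [convexHull_eq_union] at hx
      simp only [Set.mem_iUnion] at hx
      obtain ⟨t, hts, hai, hxt⟩ := hx
      have hcard : t.card ≤ N := by
        have h1 := hai.card_le_finrank_succ
        have h2 : Module.finrank ℝ (vectorSpan ℝ (Set.range ((↑) : t → E))) ≤
            Module.finrank ℝ E := Submodule.finrank_le _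
        simpa [Fintype.card_coe, hN] using h1.trans (by omega)
      rw [Finset.convexHull_eq] at hxt
      obtain ⟨w, hw0, hw1, hwx⟩ := hxt
      set e := t.equivFin with he
      refine ⟨⟨fun i => if hh : (i : ℕ) < t.card then w (e.symm ⟨i, hh⟩) else 0,
               fun i => if hh : (i : ℕ) < t.card then ((e.symm ⟨i, hh⟩ : t) : E) else g0⟩,
               ⟨⟨fun i => ?_, ?_⟩, fun i _ => ?_⟩, ?_⟩
      · dsimp only; split
        · exact hw0 _ (Finset.coe_mem _)
        · exact le_refl 0
      · dsimp only
        rw [sum_dite_fin hcard (fun j => w (e.symm j))]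
        rw [Equiv.sum_comp e.symm (fun (y : t) => w (y : E))]
        rw [Finset.sum_coe_sort t (fun y => w y)]
        exact hw1
      · dsimp only; split
        · exact hts (Finset.coe_mem _)
        · exact hg0
      · dsimp only
        have : (∑ i : Fin N, (if hh : (i : ℕ) < t.card then w (e.symm ⟨i, hh⟩) else 0) •
            (if hh : (i : ℕ) < t.card then ((e.symm ⟨i, hh⟩ : t) : E) else g0)) =
            ∑ i : Fin N, (if hh : (i : ℕ) < t.card then
              w (e.symm ⟨i, hh⟩) • ((e.symm ⟨i, hh⟩ : t) : E) else 0) :=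
          Finset.sum_congr rfl fun i _ => by
            by_cases hh : (i : ℕ) < t.card <;> simp [hh]
        rw [this, sum_dite_fin hcard (fun j => w (e.symm j) • ((e.symm j : t) : E))]
        rw [Equiv.sum_comp e.symm (fun (y : t) => w (y : E) • (y : E))]
        rw [Finset.sum_coe_sort t (fun y => w y • y)]
        rw [Finset.centerMass_eq_of_sum_1 t id hw1] at hwx
        simpa using hwx
    · rintro x ⟨⟨w, z⟩, ⟨⟨hw0, hw1⟩, hz⟩, rfl⟩
      exact mem_convexHull_of_exists_fintype w z hw0 hw1 (fun i => hz i (Set.mem_univ i)) rfl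
  rw [key]
  exact ((isCompact_stdSimplex ℝ _).prod (isCompact_univ_pi fun _ => hs)).image
    (continuous_finset_sum _ fun i _ =>
      ((continuous_apply i).comp continuous_fst).smul ((continuous_apply i).comp continuous_snd))

namespace Stmt10X
variable {p : ℕ}

def gg (t : Fin p → ℝ) : Fin p → Fin p → ℝ := fun i j => t i * t j

def KK (p : ℕ) : Set (Fin p → ℝ) := {t | (∀ k, 0 ≤ t k) ∧ ∑ k, t k * t k = 1}

def GG (p : ℕ) : Set (Fin p → Fin p → ℝ) := gg '' KK p

def CC (p : ℕ) : Set (Fin p → Fin p → ℝ) :=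
  {v | ∃ c : ℝ, 0 ≤ c ∧ ∃ x ∈ convexHull ℝ (GG p), v = c • x}

lemma e0_mem (hp : 0 < p) : Pi.single (⟨0, hp⟩ : Fin p) (1 : ℝ) ∈ KK p := by
  constructor
  · intro k
    rcases eq_or_ne k ⟨0, hp⟩ with rfl | hk
    · simp
    · simp [Pi.single_apply, hk]
  · simp [Pi.single_apply, mul_ite, Finset.sum_ite_eq']

lemma gg_mem_GG {t : Fin p → ℝ} (ht : t ∈ KK p) : gg t ∈ GG p := ⟨t, ht, rfl⟩

lemma isCompact_KK : IsCompact (KK p) := by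
  have hcl : IsClosed (KK p) := by
    apply IsClosed.inter
    · have h := isClosed_iInter (fun k : Fin p =>
        (isClosed_le continuous_const (continuous_apply k) :
          IsClosed {t : Fin p → ℝ | 0 ≤ t k}))
      rw [← Set.setOf_forall] at h
      exact h
    · exact isClosed_eq (continuous_finset_sum _ fun k _ =>
        (continuous_apply k).mul (continuous_apply k)) continuous_const
  have hbd : KK p ⊆ Metric.closedBall 0 1 := by
    intro t ⟨h0, h1⟩
    rw [Metric.mem_closedBall, dist_zero_right]
    rw [pi_norm_le_iff_of_nonneg (by norm_num)]
    intro k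
    rw [Real.norm_eq_abs, abs_of_nonneg (h0 k)]
    have hk : t k * t k ≤ 1 := by
      rw [← h1]
      exact Finset.single_le_sum (fun j _ => mul_self_nonneg (t j)) (Finset.mem_univ k)
    nlinarith [h0 k]
  exact (Metric.isCompact_of_isClosed_isBounded hcl
    (Metric.isBounded_closedBall.subset hbd))

lemma continuous_gg : Continuous (gg (p := p)) :=
  continuous_pi fun i => continuous_pi fun j => (continuous_apply i).mul (continuous_apply j)

lemma isCompact_GG : IsCompact (GG p) := isCompact_KK.image continuous_gg

lemma continuous_tr : Continuous (fun v : Fin p → Fin p → ℝ => ∑ i, v i i) :=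
  continuous_finset_sum _ fun i _ => (continuous_apply i).comp (continuous_apply i)

lemma tr_convexHull {x : Fin p → Fin p → ℝ} (hx : x ∈ convexHull ℝ (GG p)) :
    ∑ i, x i i = 1 := by
  have hsub : convexHull ℝ (GG p) ⊆ {x | ∑ i, x i i = 1} := by
    apply convexHull_min
    · rintro _ ⟨t, ⟨h0, h1⟩, rfl⟩
      exact h1
    · exact convex_hyperplane ⟨fun a b => by simp [Finset.sum_add_distrib],
        fun c a => by simp [Finset.mul_sum]⟩ 1
  exact hsub hx

lemma isClosed_CC (hp : 0 < p) : IsClosed (CC p) := by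
  have hH : IsCompact (convexHull ℝ (GG p)) :=
    isCompact_convexHull' isCompact_GG ⟨_, gg_mem_GG (e0_mem hp)⟩
  apply IsSeqClosed.isClosed
  intro x y hx hxy
  choose c hc0 h hmem hrep using hx
  have htr : ∀ n, (∑ i, x n i i) = c n := by
    intro n
    rw [hrep n]
    simp only [Pi.smul_apply, smul_eq_mul, ← Finset.mul_sum]
    rw [tr_convexHull (hmem n), mul_one]
  have hc_tend : Filter.Tendsto c Filter.atTop (nhds (∑ i, y i i)) := by
    have h0 := (continuous_tr.tendsto y).comp hxy
    have heq : c = fun n => ∑ i, x n i i := funext fun n => (htr n).symm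
    rw [heq]
    simpa [Function.comp_def] using h0
  obtain ⟨a, haH, φ, hφ, hha⟩ := hH.tendsto_subseq hmem
  refine ⟨∑ i, y i i, ge_of_tendsto hc_tend (Filter.Eventually.of_forall hc0), a, haH, ?_⟩
  have h1 : Filter.Tendsto (fun k => x (φ k)) Filter.atTop (nhds y) :=
    hxy.comp hφ.tendsto_atTop
  have h2 : Filter.Tendsto (fun k => x (φ k)) Filter.atTop (nhds ((∑ i, y i i) • a)) := by
    have : (fun k => x (φ k)) = fun k => c (φ k) • h (φ k) := funext fun k => hrep (φ k)
    rw [this]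
    exact (hc_tend.comp hφ.tendsto_atTop).smul hha
  exact tendsto_nhds_unique h1 h2

lemma convex_CC : Convex ℝ (CC p) := by
  rintro v ⟨c1, hc1, x1, hx1, rfl⟩ w ⟨c2, hc2, x2, hx2, rfl⟩ a b ha hb hab
  by_cases hc : a * c1 + b * c2 = 0
  · have h1 : a * c1 = 0 := by nlinarith [mul_nonneg ha hc1, mul_nonneg hb hc2]
    have h2 : b * c2 = 0 := by nlinarith [mul_nonneg ha hc1, mul_nonneg hb hc2]
    exact ⟨0, le_rfl, x1, hx1, by rw [smul_smul, smul_smul, h1, h2]; simp⟩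
  · have hcpos : 0 ≤ a * c1 + b * c2 := by positivity
    refine ⟨a * c1 + b * c2, hcpos,
      (a * c1 / (a * c1 + b * c2)) • x1 + (b * c2 / (a * c1 + b * c2)) • x2, ?_, ?_⟩
    · exact (convex_convexHull ℝ (GG p)) hx1 hx2 (by positivity) (by positivity)
        (by rw [← add_div, div_self hc])
    · have key : ∀ q : ℝ, (a * c1 + b * c2) * (q / (a * c1 + b * c2)) = q := fun q => by
        field_simp
      rw [smul_add]
      simp only [smul_smul]
      rw [key, key]


def CP (p : ℕ) : Set (Matrix (Fin p) (Fin p) ℝ) :=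
  {U | ∃ (n : ℕ) (α : Fin n → ℝ) (t : Fin n → (Fin p → ℝ)),
    (∀ i, 0 ≤ α i) ∧ (∀ i k, 0 ≤ t i k) ∧ U = ∑ i, α i • vecMulVec (t i) (t i)}

lemma mem_CP_iff (hp : 0 < p) (U : Matrix (Fin p) (Fin p) ℝ) :
    U ∈ CP p ↔ (fun i j => U i j) ∈ CC p := by
  constructor
  · rintro ⟨n, α, t, hα, ht, rfl⟩
    set s : Fin n → ℝ := fun i => ∑ k, t i k * t i k with hsdef
    have hs0 : ∀ i, 0 ≤ s i := fun i => Finset.sum_nonneg fun k _ => mul_self_nonneg _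
    have hzero : ∀ i, s i = 0 → ∀ k, t i k = 0 := by
      intro i hsi k
      have := (Finset.sum_eq_zero_iff_of_nonneg (fun k _ => mul_self_nonneg (t i k))).1 hsi k
        (Finset.mem_univ k)
      exact mul_self_eq_zero.1 this
    set e0 : Fin p → ℝ := Pi.single ⟨0, hp⟩ 1 with he0
    set u : Fin n → Fin p → ℝ :=
      fun i => if s i = 0 then e0 else (Real.sqrt (s i))⁻¹ • t i with hu_def
    have hu : ∀ i, u i ∈ KK p := by
      intro i
      by_cases hsi : s i = 0
      · simp only [hu_def, if_pos hsi]
        exact e0_mem hp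
      · have hspos : 0 < s i := lt_of_le_of_ne (hs0 i) (Ne.symm hsi)
        have hss : Real.sqrt (s i) * Real.sqrt (s i) = s i := Real.mul_self_sqrt (hs0 i)
        have hinv : (Real.sqrt (s i))⁻¹ * (Real.sqrt (s i))⁻¹ = (s i)⁻¹ := by
          rw [← mul_inv, hss]
        simp only [hu_def, if_neg hsi]
        constructor
        · intro k
          exact mul_nonneg (inv_nonneg.2 (Real.sqrt_nonneg _)) (ht i k)
        · have : (∑ k, ((Real.sqrt (s i))⁻¹ * t i k) * ((Real.sqrt (s i))⁻¹ * t i k))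
              = (Real.sqrt (s i))⁻¹ * (Real.sqrt (s i))⁻¹ * ∑ k, t i k * t i k := by
            rw [Finset.mul_sum]
            exact Finset.sum_congr rfl fun k _ => by ring
          simp only [Pi.smul_apply, smul_eq_mul]
          rw [this, hinv]
          exact inv_mul_cancel₀ hsi
    set β : Fin n → ℝ := fun i => α i * s i with hβ
    have hβ0 : ∀ i, 0 ≤ β i := fun i => mul_nonneg (hα i) (hs0 i)
    have hkey : (fun a b => (∑ i, α i • vecMulVec (t i) (t i)) a b)
        = ∑ i, β i • gg (u i) := by
      funext a b
      have hL : (∑ i, α i • vecMulVec (t i) (t i)) a b = ∑ i, α i * (t i a * t i b) := by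
        simp [Matrix.sum_apply, Matrix.vecMulVec_apply]
      have hR : (∑ i, β i • gg (u i)) a b = ∑ i, β i * (u i a * u i b) := by
        simp [Finset.sum_apply, gg]
      rw [hL, hR]
      refine Finset.sum_congr rfl fun i _ => ?_
      by_cases hsi : s i = 0
      · rw [hzero i hsi a, hβ]
        simp [hsi]
      · have hss : Real.sqrt (s i) * Real.sqrt (s i) = s i := Real.mul_self_sqrt (hs0 i)
        have hinv : (Real.sqrt (s i))⁻¹ * (Real.sqrt (s i))⁻¹ = (s i)⁻¹ := by
          rw [← mul_inv, hss]
        simp only [hu_def, if_neg hsi, Pi.smul_apply, smul_eq_mul, hβ]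
        have : α i * s i * ((Real.sqrt (s i))⁻¹ * t i a * ((Real.sqrt (s i))⁻¹ * t i b))
            = α i * (s i * (s i)⁻¹) * (t i a * t i b) := by
          rw [← hinv]; ring
        rw [this, mul_inv_cancel₀ hsi, mul_one]
    rw [show ((fun i j => (∑ i, α i • vecMulVec (t i) (t i)) i j) : Fin p → Fin p → ℝ)
        = ∑ i, β i • gg (u i) from hkey]
    by_cases hc : (∑ i, β i) = 0
    · have hb0 : ∀ i ∈ Finset.univ, β i = 0 :=
        (Finset.sum_eq_zero_iff_of_nonneg fun i _ => hβ0 i).1 hc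
      refine ⟨0, le_rfl, gg e0, subset_convexHull ℝ _ (gg_mem_GG (e0_mem hp)), ?_⟩
      rw [Finset.sum_eq_zero fun i hi => by rw [hb0 i hi, zero_smul], zero_smul]
    · refine ⟨∑ i, β i, Finset.sum_nonneg fun i _ => hβ0 i,
        ∑ i, (β i / (∑ j, β j)) • gg (u i), ?_, ?_⟩
      · exact Convex.sum_mem (convex_convexHull ℝ _)
          (fun i _ => div_nonneg (hβ0 i) (Finset.sum_nonneg fun j _ => hβ0 j))
          (by rw [← Finset.sum_div, div_self hc])
          (fun i _ => subset_convexHull ℝ _ (gg_mem_GG (hu i)))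
      · rw [Finset.smul_sum]
        exact (Finset.sum_congr rfl fun i _ => by
          rw [smul_smul, mul_div_cancel₀ _ hc]).symm
  · rintro ⟨c, hc, x, hx, hveq⟩
    rw [mem_convexHull_iff_exists_fintype] at hx
    obtain ⟨ι, _i, w, z, hw0, hw1, hzG, hsum⟩ := hx
    choose u huK hgu using fun i => hzG i
    set e := Fintype.equivFin ι with he
    refine ⟨Fintype.card ι, fun j => c * w (e.symm j), fun j => u (e.symm j),
      fun j => mul_nonneg hc (hw0 _), fun j k => (huK _).1 k, ?_⟩
    ext a b
    have hU : U a b = c * x a b := by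
      have := congrFun (congrFun hveq a) b
      simpa using this
    have hx_ab : x a b = ∑ i, w i * (u i a * u i b) := by
      rw [← hsum]
      simp only [Finset.sum_apply, Pi.smul_apply, smul_eq_mul]
      refine Finset.sum_congr rfl fun i _ => ?_
      rw [← hgu i]
      rfl
    have hRHS : (∑ j, (c * w (e.symm j)) • vecMulVec (u (e.symm j)) (u (e.symm j))) a b
        = ∑ j, c * w (e.symm j) * (u (e.symm j) a * u (e.symm j) b) := by
      simp [Matrix.sum_apply, Matrix.vecMulVec_apply]
    rw [hRHS, Equiv.sum_comp e.symm (fun i => c * w i * (u i a * u i b)), hU, hx_ab,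
      Finset.mul_sum]
    exact Finset.sum_congr rfl fun i _ => by ring


lemma trace_vecMulVec_mul (t : Fin p → ℝ) (X : Matrix (Fin p) (Fin p) ℝ) :
    (vecMulVec t t * X).trace = t ⬝ᵥ X.mulVec t := by
  have h1 : (vecMulVec t t * X).trace = ∑ a, ∑ b, t a * t b * X b a := by
    simp [Matrix.trace, Matrix.diag, Matrix.mul_apply, Matrix.vecMulVec_apply]
  have h2 : t ⬝ᵥ X.mulVec t = ∑ a, ∑ b, t a * (X a b * t b) := by
    simp [dotProduct, Matrix.mulVec, Finset.mul_sum]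
  rw [h1, h2, Finset.sum_comm]
  exact Finset.sum_congr rfl fun b _ => Finset.sum_congr rfl fun a _ => by ring

end Stmt10X

open Stmt10X in
theorem stmt10 (p : ℕ) :
    {U : Matrix (Fin p) (Fin p) ℝ |
      ∃ (n : ℕ) (α : Fin n → ℝ) (t : Fin n → (Fin p → ℝ)),
        (∀ i, 0 ≤ α i) ∧ (∀ i k, 0 ≤ t i k) ∧
        U = ∑ i, α i • vecMulVec (t i) (t i)} =
    {U : Matrix (Fin p) (Fin p) ℝ | U.IsSymm ∧
      ∀ X : Matrix (Fin p) (Fin p) ℝ, X.IsSymm →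
        (∀ t : Fin p → ℝ, (∀ k, 0 ≤ t k) → 0 ≤ t ⬝ᵥ X.mulVec t) →
        0 ≤ (U * X).trace} := by
  ext U
  simp only [Set.mem_setOf_eq]
  constructor
  · rintro ⟨n, α, t, hα, ht, rfl⟩
    constructor
    · ext a b
      simp only [Matrix.transpose_apply, Matrix.sum_apply, Matrix.smul_apply,
        Matrix.vecMulVec_apply, smul_eq_mul]
      exact Finset.sum_congr rfl fun i _ => by ring
    · intro X hXs hXcop
      have hmul : (∑ i, α i • vecMulVec (t i) (t i)) * X
          = ∑ i, α i • (vecMulVec (t i) (t i) * X) := by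
        rw [Finset.sum_mul]
        exact Finset.sum_congr rfl fun i _ => smul_mul_assoc _ _ _
      rw [hmul, Matrix.trace_sum]
      refine Finset.sum_nonneg fun i _ => ?_
      rw [Matrix.trace_smul, smul_eq_mul]
      exact mul_nonneg (hα i) (by rw [trace_vecMulVec_mul]; exact hXcop (t i) (ht i))
  · rcases Nat.eq_zero_or_pos p with rfl | hp
    · intro _
      exact ⟨0, Fin.elim0, Fin.elim0, fun i => i.elim0, fun i => i.elim0,
        by ext i j; exact i.elim0⟩
    rintro ⟨hUsymm, hU⟩
    by_contra hUCP
    have hv : (fun i j => U i j) ∉ CC p := fun h => hUCP ((mem_CP_iff hp U).2 h)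
    obtain ⟨f, m, hfm, hmb⟩ :=
      geometric_hahn_banach_point_closed (convex_CC) (isClosed_CC hp) hv
    have h0 : (0 : Fin p → Fin p → ℝ) ∈ CC p :=
      ⟨0, le_rfl, gg (Pi.single ⟨0, hp⟩ 1),
        subset_convexHull ℝ _ (gg_mem_GG (e0_mem hp)), by simp⟩
    have hm0 : m < 0 := by have := hmb 0 h0; simpa using this
    have hfU : f (fun i j => U i j) < 0 := hfm.trans hm0
    have hfC : ∀ b ∈ CC p, 0 ≤ f b := by
      intro b hb
      by_contra hfb
      push_neg at hfb
      obtain ⟨c', hc', x, hxH, rfl⟩ := hb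
      have hd : 0 ≤ (m - 1) / f (c' • x) := by
        rw [div_nonneg_iff]
        right
        constructor <;> linarith
      have hscale : ((m - 1) / f (c' • x)) • (c' • x) ∈ CC p :=
        ⟨((m - 1) / f (c' • x)) * c', mul_nonneg hd hc', x, hxH, by rw [smul_smul]⟩
      have hgt := hmb _ hscale
      rw [_root_.map_smul, smul_eq_mul, div_mul_cancel₀ _ (ne_of_lt hfb)] at hgt
      linarith
    set ee : Fin p → Fin p → (Fin p → Fin p → ℝ) :=
      fun i j => Pi.single i (Pi.single j 1) with hee
    have hrep : ∀ v : Fin p → Fin p → ℝ, f v = ∑ i, ∑ j, v i j * f (ee i j) := by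
      intro v
      have hv' : v = ∑ i, ∑ j, v i j • ee i j := by
        funext a b
        simp [hee, Finset.sum_apply, Pi.single_apply, ite_apply, mul_ite,
          Finset.sum_ite_eq, Finset.sum_ite_eq']
      conv_lhs => rw [hv']
      simp [map_sum, _root_.map_smul, smul_eq_mul]
    set X : Matrix (Fin p) (Fin p) ℝ :=
      Matrix.of (fun i j => f (ee i j) + f (ee j i)) with hX
    have hXsymm : X.IsSymm := by
      ext a b
      simp only [hX, Matrix.transpose_apply, Matrix.of_apply]
      exact add_comm _ _
    have hswap : ∀ (w : Fin p → Fin p → ℝ),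
        ∑ a, ∑ b, w a b * f (ee b a) = ∑ a, ∑ b, w b a * f (ee a b) := by
      intro w
      rw [Finset.sum_comm]
    have hXcop : ∀ t : Fin p → ℝ, (∀ k, 0 ≤ t k) → 0 ≤ t ⬝ᵥ X.mulVec t := by
      intro t htn
      have hggC : gg t ∈ CC p := by
        have hmem : vecMulVec t t ∈ CP p :=
          ⟨1, fun _ => 1, fun _ => t, fun _ => zero_le_one, fun _ => htn, by simp⟩
        have h2 := (mem_CP_iff hp (vecMulVec t t)).1 hmem
        have heq : gg t = fun i j => vecMulVec t t i j := by
          funext i j; simp [gg, Matrix.vecMulVec_apply]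
        rw [heq]
        exact h2
      have hfgg := hfC _ hggC
      have hquad : t ⬝ᵥ X.mulVec t = f (gg t) + f (gg t) := by
        have h1 : t ⬝ᵥ X.mulVec t
            = ∑ a, ∑ b, (gg t a b * f (ee a b) + gg t a b * f (ee b a)) := by
          simp only [dotProduct, Matrix.mulVec, hX, Matrix.of_apply, Finset.mul_sum]
          exact Finset.sum_congr rfl fun a _ => Finset.sum_congr rfl fun b _ => by
            simp only [gg]; ring
        rw [h1]
        simp only [Finset.sum_add_distrib]
        have h2 : ∑ a, ∑ b, gg t a b * f (ee b a) = ∑ a, ∑ b, gg t a b * f (ee a b) := by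
          rw [hswap (gg t)]
          exact Finset.sum_congr rfl fun a _ => Finset.sum_congr rfl fun b _ => by
            simp only [gg]; ring
        rw [h2, ← hrep (gg t)]
      rw [hquad]
      linarith
    have htrace : (U * X).trace = f (fun i j => U i j) + f (fun i j => U i j) := by
      have h1 : (U * X).trace
          = ∑ a, ∑ b, (U a b * f (ee a b) + U a b * f (ee b a)) := by
        simp only [Matrix.trace, Matrix.diag, Matrix.mul_apply, hX, Matrix.of_apply]
        exact Finset.sum_congr rfl fun a _ => Finset.sum_congr rfl fun b _ => by ring
      have hU' : ∀ a b, U b a = U a b := by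
        intro a b
        conv_lhs => rw [← hUsymm]
        exact Matrix.transpose_apply U b a
      have h2 : ∑ a, ∑ b, U a b * f (ee b a) = ∑ a, ∑ b, U a b * f (ee a b) := by
        rw [hswap U]
        exact Finset.sum_congr rfl fun a _ => Finset.sum_congr rfl fun b _ => by
          rw [hU']
      rw [h1]
      simp only [Finset.sum_add_distrib]
      rw [h2, ← hrep (fun i j => U i j)]
    have := hU X hXsymm hXcop
    rw [htrace] at this
    linarith
end

section
/- If X is a copositive p×p matrix and there exists a vector t with all entries strictly positive such that t^T X t = 0, then X is positive semidefinite. -/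
/-! Since `t` lies in the interior of the nonnegative orthant, `t + c • s` stays nonnegative
for all small `c` of either sign. Copositivity and `tᵀ X t = 0` then give
`2 c sᵀ X t + c² sᵀ X s ≥ 0` for all small `c`, and adding the inequalities at `c = ±δ`
yields `sᵀ X s ≥ 0`. -/

open Matrix Filter Topology

lemma Matrix.IsSymm.dotProduct_mulVec_comm {ι R : Type*} [Fintype ι] [CommSemiring R]
    {X : Matrix ι ι R} (hX : X.IsSymm) (a b : ι → R) : a ⬝ᵥ X *ᵥ b = b ⬝ᵥ X *ᵥ a := by
  rw [dotProduct_mulVec, ← mulVec_transpose, hX.eq, dotProduct_comm]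

lemma Matrix.IsSymm.dotProduct_mulVec_add_smul {ι R : Type*} [Fintype ι] [CommRing R]
    {X : Matrix ι ι R} (hX : X.IsSymm) (t s : ι → R) (c : R) :
    (t + c • s) ⬝ᵥ X *ᵥ (t + c • s)
      = t ⬝ᵥ X *ᵥ t + 2 * c * (s ⬝ᵥ X *ᵥ t) + c ^ 2 * (s ⬝ᵥ X *ᵥ s) := by
  simp only [mulVec_add, mulVec_smul, dotProduct_add, add_dotProduct, smul_dotProduct,
    dotProduct_smul, smul_eq_mul, hX.dotProduct_mulVec_comm t s]
  ring

lemma eventually_nonneg_add_smul {ι : Type*} [Finite ι] {t : ι → ℝ} (ht : ∀ k, 0 < t k)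
    (s : ι → ℝ) : ∀ᶠ c in 𝓝 (0 : ℝ), 0 ≤ t + c • s := by
  suffices ∀ k, ∀ᶠ c in 𝓝 (0 : ℝ), 0 < t k + c * s k from
    (eventually_all.2 this).mono fun c hc k => by simpa using (hc k).le
  intro k
  have hcont : Tendsto (fun c : ℝ => t k + c * s k) (𝓝 0) (𝓝 (t k)) :=
    (continuous_const.add (continuous_id.mul continuous_const)).tendsto' 0 (t k) (by simp)
  exact hcont.eventually_const_lt (ht k)

lemma nonneg_of_eventually_nonneg_mul_add_mul_sq {a b : ℝ}
    (h : ∀ᶠ c in 𝓝 (0 : ℝ), 0 ≤ b * c + a * c ^ 2) : 0 ≤ a := by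
  obtain ⟨ε, hε, hball⟩ := Metric.eventually_nhds_iff.1 h
  have hpos := hball (y := ε / 2) (by rw [Real.dist_0_eq_abs, abs_of_pos (half_pos hε)]; linarith)
  have hneg := hball (y := -(ε / 2))
    (by rw [Real.dist_0_eq_abs, abs_neg, abs_of_pos (half_pos hε)]; linarith)
  nlinarith [pow_pos (half_pos hε) 2]

theorem stmt16 (p : ℕ) (X : Matrix (Fin p) (Fin p) ℝ)
    (hX : X.IsSymm)
    (hcop : ∀ s : Fin p → ℝ, (∀ k, 0 ≤ s k) → 0 ≤ s ⬝ᵥ X.mulVec s)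
    (t : Fin p → ℝ) (ht : ∀ k, 0 < t k) (hzero : t ⬝ᵥ X.mulVec t = 0) :
    X.PosSemidef := by
  refine posSemidef_iff_dotProduct_mulVec.2 ⟨isHermitian_iff_isSymm.2 hX, fun s => ?_⟩
  have hnear :
      ∀ᶠ c in 𝓝 (0 : ℝ), 0 ≤ 2 * (s ⬝ᵥ X *ᵥ t) * c + (s ⬝ᵥ X *ᵥ s) * c ^ 2 :=
    (eventually_nonneg_add_smul ht s).mono fun c hc => by
      have := hcop _ hc
      rw [hX.dotProduct_mulVec_add_smul, hzero] at this
      linarith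
  simpa using nonneg_of_eventually_nonneg_mul_add_mul_sq hnear
end

section
/- Let X⁰ be a copositive p×p matrix and suppose the set of its zeros on the simplex T_a(X⁰) = {t ≥ 0, ∑ t_k = 1, t^T X⁰ t = 0} is nonempty. If X(ε) is a family of copositive matrices converging to X⁰ as ε → 0, then the Hausdorff-type deviation δ(ε) = max_{t ∈ T_a(X(ε))} min_{τ ∈ T_a(X⁰)} ‖t − τ‖ converges to 0 as ε → 0, provided T_a(X(ε)) is nonempty for all small ε. -/
/-!
On the standard simplex `Δ` the quadratic form `q₀ t = tᵀ X⁰ t` is continuous and nonnegative, and its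
zero set is `T_a(X⁰)`. By compactness `q₀` is bounded below by some `ρ > 0` on the points of `Δ` at
distance at least `δ` from `T_a(X⁰)`. A zero `t` of `X(ε)` has
`q₀ t = tᵀ (X⁰ - X(ε)) t ≤ maxᵢⱼ (X⁰ - X(ε))ᵢⱼ`, which is below `ρ` for small `ε`, so `t` lies within
`δ` of `T_a(X⁰)`.
-/

open Matrix

/-- The set of normalized zeros of a matrix `X`: vectors in the standard
simplex with `tᵀ X t = 0`. -/
def Ta {p : ℕ} (X : Matrix (Fin p) (Fin p) ℝ) : Set (Fin p → ℝ) :=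
  {t | (∀ k, 0 ≤ t k) ∧ ∑ k, t k = 1 ∧ t ⬝ᵥ X.mulVec t = 0}

open Filter Topology Metric

theorem IsCompact.exists_pos_forall_infDist_zeros_lt {α : Type*} [PseudoMetricSpace α] {K : Set α}
    (hK : IsCompact K) {f : α → ℝ} (hf : ContinuousOn f K) (hf₀ : ∀ x ∈ K, 0 ≤ f x)
    {δ : ℝ} (hδ : 0 < δ) :
    ∃ ρ > 0, ∀ x ∈ K, f x < ρ → infDist x (K ∩ f ⁻¹' {0}) < δ := by
  set far := K ∩ {x | δ ≤ infDist x (K ∩ f ⁻¹' {0})}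
  have hfar : IsCompact far :=
    hK.inter_right (isClosed_le continuous_const (continuous_infDist_pt _))
  have hpos : ∀ x ∈ far, 0 < f x := by
    rintro x ⟨hxK, hxδ⟩
    refine (hf₀ x hxK).lt_of_ne fun hzero => ?_
    have hdist : infDist x (K ∩ f ⁻¹' {0}) = 0 := infDist_zero_of_mem ⟨hxK, hzero.symm⟩
    exact (hxδ.trans_eq hdist).not_gt hδ
  obtain ⟨ρ, hρ, hρf⟩ := hfar.exists_forall_le' (hf.mono Set.inter_subset_left) hpos
  refine ⟨ρ, hρ, fun x hxK hfx => ?_⟩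
  by_contra! hxδ
  exact (hρf x ⟨hxK, hxδ⟩).not_gt hfx

theorem Matrix.continuous_dotProduct_mulVec_self {ι : Type*} [Fintype ι]
    (M : Matrix ι ι ℝ) : Continuous fun t : ι → ℝ => t ⬝ᵥ M *ᵥ t :=
  continuous_id.dotProduct (continuous_const.matrix_mulVec continuous_id)

theorem Matrix.dotProduct_mulVec_self_le_of_mem_stdSimplex {ι : Type*} [Fintype ι]
    {M : Matrix ι ι ℝ} {t : ι → ℝ} (ht : t ∈ stdSimplex ℝ ι) {b : ℝ} (hM : ∀ i j, M i j ≤ b) :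
    t ⬝ᵥ M *ᵥ t ≤ b := by
  obtain ⟨ht₀, ht₁⟩ := ht
  calc t ⬝ᵥ M *ᵥ t = ∑ i, t i * ∑ j, M i j * t j := rfl
    _ ≤ ∑ i, t i * ∑ j, b * t j := by
      gcongr with i _ j _
      exacts [ht₀ i, ht₀ j, hM i j]
    _ = b := by simp only [← Finset.mul_sum, ht₁, mul_one, ← Finset.sum_mul, one_mul]

theorem Ta_eq_stdSimplex_inter {p : ℕ} (X : Matrix (Fin p) (Fin p) ℝ) :
    Ta X = stdSimplex ℝ (Fin p) ∩ (fun t => t ⬝ᵥ X *ᵥ t) ⁻¹' {0} := by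
  ext t
  simp only [Ta, stdSimplex, Set.mem_inter_iff, Set.mem_ofPred_eq, Set.mem_preimage,
    Set.mem_singleton_iff, and_assoc]

theorem dotProduct_mulVec_self_le_of_mem_Ta {p : ℕ} {X Y : Matrix (Fin p) (Fin p) ℝ}
    {t : Fin p → ℝ} (ht : t ∈ Ta Y) {b : ℝ} (hXY : ∀ i j, X i j - Y i j ≤ b) :
    t ⬝ᵥ X *ᵥ t ≤ b := by
  rw [Ta_eq_stdSimplex_inter] at ht
  have hzero : t ⬝ᵥ Y *ᵥ t = 0 := ht.2
  calc t ⬝ᵥ X *ᵥ t = t ⬝ᵥ (X - Y) *ᵥ t := by rw [sub_mulVec, dotProduct_sub, hzero, sub_zero]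
    _ ≤ b := dotProduct_mulVec_self_le_of_mem_stdSimplex ht.1 hXY

theorem exists_pos_forall_infDist_Ta_lt {p : ℕ} {X : Matrix (Fin p) (Fin p) ℝ}
    (hX : ∀ t : Fin p → ℝ, (∀ k, 0 ≤ t k) → 0 ≤ t ⬝ᵥ X *ᵥ t) {δ : ℝ} (hδ : 0 < δ) :
    ∃ ρ > 0, ∀ t ∈ stdSimplex ℝ (Fin p), t ⬝ᵥ X *ᵥ t < ρ → infDist t (Ta X) < δ := by
  rw [Ta_eq_stdSimplex_inter]
  exact (isCompact_stdSimplex ℝ (Fin p)).exists_pos_forall_infDist_zeros_lt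
    (continuous_dotProduct_mulVec_self X).continuousOn (fun t ht => hX t ht.1) hδ

theorem stmt18_general (p : ℕ) (X0 : Matrix (Fin p) (Fin p) ℝ)
    (hX0 : ∀ t : Fin p → ℝ, (∀ k, 0 ≤ t k) → 0 ≤ t ⬝ᵥ X0.mulVec t)
    (X : ℝ → Matrix (Fin p) (Fin p) ℝ)
    (hconv : Filter.Tendsto X (nhdsWithin 0 (Set.Ioi 0)) (nhds X0)) :
    Filter.Tendsto
      (fun ε => sSup ((fun t => Metric.infDist t (Ta X0)) '' Ta (X ε)))
      (nhdsWithin 0 (Set.Ioi 0)) (nhds 0) := by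
  rw [Metric.tendsto_nhds]
  intro δ hδ
  obtain ⟨ρ, hρ, hnear⟩ := exists_pos_forall_infDist_Ta_lt hX0 (half_pos hδ)
  have hentries : ∀ᶠ ε in 𝓝[>] 0, ∀ i j, X0 i j - X ε i j ≤ ρ / 2 := by
    simp only [eventually_all]
    intro i j
    have hij := tendsto_pi_nhds.1 (tendsto_pi_nhds.1 hconv i) j
    filter_upwards [(tendsto_order.1 hij).1 (X0 i j - ρ / 2) (by linarith)] with ε hε
    linarith
  filter_upwards [hentries] with ε hε
  have hle : sSup ((fun t => infDist t (Ta X0)) '' Ta (X ε)) ≤ δ / 2 := by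
    refine Real.sSup_le ?_ (half_pos hδ).le
    rintro _ ⟨t, ht, rfl⟩
    have hq : t ⬝ᵥ X0 *ᵥ t < ρ :=
      (dotProduct_mulVec_self_le_of_mem_Ta ht hε).trans_lt (half_lt_self hρ)
    exact (hnear t ((Ta_eq_stdSimplex_inter _).subset ht).1 hq).le
  have hnonneg : 0 ≤ sSup ((fun t => infDist t (Ta X0)) '' Ta (X ε)) :=
    Real.sSup_nonneg (by rintro _ ⟨t, -, rfl⟩; exact infDist_nonneg)
  rw [Real.dist_eq, sub_zero, abs_of_nonneg hnonneg]
  linarith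

theorem stmt18 (p : ℕ) (X0 : Matrix (Fin p) (Fin p) ℝ)
    (hX0 : ∀ t : Fin p → ℝ, (∀ k, 0 ≤ t k) → 0 ≤ t ⬝ᵥ X0.mulVec t)
    (hTa0 : (Ta X0).Nonempty)
    (X : ℝ → Matrix (Fin p) (Fin p) ℝ)
    (hcop : ∀ ε, ∀ t : Fin p → ℝ, (∀ k, 0 ≤ t k) → 0 ≤ t ⬝ᵥ (X ε).mulVec t)
    (hconv : Filter.Tendsto X (nhdsWithin 0 (Set.Ioi 0)) (nhds X0))
    (hne : ∀ᶠ ε in nhdsWithin 0 (Set.Ioi 0), (Ta (X ε)).Nonempty) :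
    Filter.Tendsto
      (fun ε => sSup ((fun t => Metric.infDist t (Ta X0)) '' Ta (X ε)))
      (nhdsWithin 0 (Set.Ioi 0)) (nhds 0) :=
  stmt18_general p X0 hX0 X hconv
end

section
/- Let τ(j), j ∈ J_b, be linearly independent nonnegative vectors in ℝ^p. Then the matrices (τ(i)+τ(j))(τ(i)+τ(j))^T for pairs (i,j) with i,j ∈ J_b, i ≤ j, are linearly independent in the space of symmetric p×p matrices. -/
open Matrix

theorem stmt19 (p n : ℕ) (τ : Fin n → (Fin p → ℝ))
    (hpos : ∀ j k, 0 ≤ τ j k)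
    (hindep : LinearIndependent ℝ τ) :
    LinearIndependent ℝ
      (fun q : {q : Fin n × Fin n // q.1 ≤ q.2} =>
        vecMulVec (τ q.1.1 + τ q.1.2) (τ q.1.1 + τ q.1.2)) := by
  classical
  -- dual functionals
  obtain ⟨Q, hQ⟩ := Submodule.exists_isCompl (Submodule.span ℝ (Set.range τ))
  set pr := Submodule.linearProjOfIsCompl _ Q hQ with hpr
  set φ : Fin n → ((Fin p → ℝ) →ₗ[ℝ] ℝ) :=
    fun k => (Finsupp.lapply k) ∘ₗ (hindep.repr : _) ∘ₗ pr with hφdef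
  have hφ : ∀ k l, φ k (τ l) = if l = k then 1 else 0 := by
    intro k l
    have hmem : τ l ∈ Submodule.span ℝ (Set.range τ) :=
      Submodule.subset_span ⟨l, rfl⟩
    have h1 : pr (τ l) = ⟨τ l, hmem⟩ :=
      Submodule.linearProjOfIsCompl_apply_left hQ ⟨τ l, hmem⟩
    have h2 : hindep.repr ⟨τ l, hmem⟩ = Finsupp.single l 1 :=
      hindep.repr_eq_single l ⟨τ l, hmem⟩ rfl
    simp [hφdef, h1, h2, Finsupp.single_apply]
  -- matrix functionals
  set L : Fin n → Fin n → (Matrix (Fin p) (Fin p) ℝ →ₗ[ℝ] ℝ) :=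
    fun k l => (φ k) ∘ₗ LinearMap.pi (fun i => (φ l) ∘ₗ LinearMap.proj i) with hLdef
  have hL : ∀ k l u v, L k l (vecMulVec u v) = φ k u * φ l v := by
    intro k l u v
    have hrow : (fun i => φ l (vecMulVec u v i)) = (φ l v) • u := by
      funext i
      have hvv : vecMulVec u v i = u i • v := by
        funext j; simp [vecMulVec_apply, smul_eq_mul]
      rw [hvv, LinearMap.map_smul]
      simp [smul_eq_mul, mul_comm]
    calc L k l (vecMulVec u v) = φ k (fun i => φ l (vecMulVec u v i)) := rfl
      _ = φ k ((φ l v) • u) := by rw [hrow]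
      _ = φ k u * φ l v := by rw [LinearMap.map_smul]; simp [smul_eq_mul, mul_comm]
  rw [Fintype.linearIndependent_iff]
  intro g hg
  set δ : Fin n → Fin n → ℝ := fun a k => if a = k then 1 else 0 with hδdef
  have key : ∀ k l, ∑ x : {q : Fin n × Fin n // q.1 ≤ q.2},
      g x * ((δ x.1.1 k + δ x.1.2 k) * (δ x.1.1 l + δ x.1.2 l)) = 0 := by
    intro k l
    have h0 := congrArg (L k l) hg
    rw [map_sum, map_zero] at h0
    rw [← h0]
    apply Finset.sum_congr rfl
    intro x _
    rw [LinearMap.map_smul, hL, map_add, map_add, hφ, hφ, hφ, hφ]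
    simp [hδdef, smul_eq_mul]
  -- off-diagonal coefficients vanish
  have hoff : ∀ (x : {q : Fin n × Fin n // q.1 ≤ q.2}), x.1.1 < x.1.2 → g x = 0 := by
    rintro ⟨⟨a, b⟩, hab⟩ hlt
    have hlt' : a < b := hlt
    have h := key a b
    rw [Finset.sum_eq_single (⟨(a, b), hab⟩ : {q : Fin n × Fin n // q.1 ≤ q.2})] at h
    · simpa [hδdef, hlt'.ne, hlt'.ne'] using h
    · rintro ⟨⟨a', b'⟩, hab'⟩ - hne
      by_cases h1 : a' = a
      · by_cases h2 : b' = b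
        · exact absurd (Subtype.ext (Prod.ext h1 h2)) hne
        · have e1 : a' ≠ b := fun h => hlt'.ne (h1.symm.trans h)
          simp [hδdef, e1, h2]
      · by_cases h2 : b' = a
        · have e1 : a' ≠ b := by
            intro h
            have hba : b ≤ a := by
              have := (hab' : a' ≤ b')
              rw [h, h2] at this; exact this
            exact absurd hba (not_le.mpr hlt')
          have e2 : b' ≠ b := fun h => hlt'.ne (h2.symm.trans h)
          simp [hδdef, e1, e2]
        · simp [hδdef, h1, h2]
    · intro hnm; exact absurd (Finset.mem_univ _) hnm
  -- diagonal coefficients vanish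
  have hdiag : ∀ a : Fin n, g ⟨(a, a), le_refl a⟩ = 0 := by
    intro a
    have h := key a a
    rw [Finset.sum_eq_single (⟨(a, a), le_refl a⟩ : {q : Fin n × Fin n // q.1 ≤ q.2})] at h
    · simp [hδdef] at h
      linarith
    · rintro ⟨⟨a', b'⟩, hab'⟩ - hne
      by_cases h1 : a' = a
      · by_cases h2 : b' = a
        · exact absurd (Subtype.ext (Prod.ext h1 h2)) hne
        · have hlt : a' < b' := lt_of_le_of_ne hab' (fun h => h2 (by rw [← h]; exact h1))
          rw [hoff ⟨(a', b'), hab'⟩ hlt, zero_mul]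
      · by_cases h2 : b' = a
        · have hlt : a' < b' := lt_of_le_of_ne hab' (fun h => h1 (by rw [h]; exact h2))
          rw [hoff ⟨(a', b'), hab'⟩ hlt, zero_mul]
        · simp [hδdef, h1, h2]
    · intro hnm; exact absurd (Finset.mem_univ _) hnm
  intro x
  rcases lt_or_eq_of_le x.2 with hlt | heq
  · exact hoff x hlt
  · obtain ⟨⟨a, b⟩, hab⟩ := x
    have hab2 : a = b := heq
    subst hab2
    exact hdiag a
end
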